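/- arXiv:1902.00721 — 2 statements merged into one kernel-verified Lean document; each statement's English description precedes it below -/
import Mathlib

section
/- In the q-shuffle algebra V, for all k, ℓ ∈ ℕ the alternating words W_{−k} and W_{−ℓ} commute: W_{−k} ⋆ W_{−ℓ} = W_{−ℓ} ⋆ W_{−k}. Likewise W_{k+1} ⋆ W_{ℓ+1} = W_{ℓ+1} ⋆ W_{k+1}. -/
noncomputable section

/-- Words in the letters `x` (= `false`) and `y` (= `true`). -/
abbrev Wd := List Bool

/-- The underlying vector space of the free algebra `F⟨x,y⟩`,
with the words as a basis. -/
abbrev V (F : Type*) [Field F] := Wd →₀ F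

/-- The pairing `⟨u,v⟩` on letters: `2` if equal, `-2` if distinct. -/
def pr (a b : Bool) : ℤ := if a = b then 2 else -2

/-- `⟨u₁,b⟩ + ⟨u₂,b⟩ + ⋯ + ⟨u_r,b⟩` for a word `u` and a letter `b`. -/
def wsum (u : Wd) (b : Bool) : ℤ := (u.map fun a => pr a b).sum

variable {F : Type*} [Field F]

/-- Left multiplication by a letter, in the free (concatenation) algebra. -/
def lmul (a : Bool) (f : V F) : V F := Finsupp.mapDomain (fun w => a :: w) f

/-- The `q`-shuffle product of two words (as an element of `V F`), defined by
Rosso's recursion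
`u ⋆ v = u₁((u₂⋯u_r) ⋆ v) + q^{⟨u₁,v₁⟩+⋯+⟨u_r,v₁⟩} v₁(u ⋆ (v₂⋯v_s))`. -/
def sh (q : F) : Wd → Wd → V F
  | [], v => Finsupp.single v 1
  | u@(_ :: _), [] => Finsupp.single u 1
  | a :: u', b :: v' =>
      lmul a (sh q u' (b :: v')) +
        q ^ wsum (a :: u') b • lmul b (sh q (a :: u') v')
  termination_by u v => u.length + v.length
  decreasing_by all_goals (simp only [List.length_cons]; omega)

/-- The `q`-shuffle product on `V F`, extended bilinearly from words. -/
def st (q : F) (f g : V F) : V F :=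
  f.sum fun u cu => g.sum fun v cv => (cu * cv) • sh q u v

/-- The concatenation (free-algebra) product on `V F`. -/
def cm (f g : V F) : V F :=
  f.sum fun u cu => g.sum fun v cv => Finsupp.single (u ++ v) (cu * cv)

/-- Powers with respect to the concatenation product. -/
def cpow (f : V F) : ℕ → V F
  | 0 => Finsupp.single [] 1
  | n + 1 => cm f (cpow f n)

/-- The alternating word `W_{-k} = xyx⋯x` of length `2k+1`. -/
def altX : ℕ → Wd
  | 0 => [false]
  | k + 1 => false :: true :: altX k

/-- The alternating word `W_{k+1} = yxy⋯y` of length `2k+1`. -/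
def altY : ℕ → Wd
  | 0 => [true]
  | k + 1 => true :: false :: altY k

/-- The alternating word `G_k = (yx)^k`. -/
def gw : ℕ → Wd
  | 0 => []
  | k + 1 => true :: false :: gw k

/-- The alternating word `G̃_k = (xy)^k`. -/
def gtw : ℕ → Wd
  | 0 => []
  | k + 1 => false :: true :: gtw k

/-- `W_{-k}` as an element of `V F`. -/
def Wm (F : Type*) [Field F] (k : ℕ) : V F := Finsupp.single (altX k) 1

/-- `W_{k+1}` as an element of `V F`. -/
def Wp (F : Type*) [Field F] (k : ℕ) : V F := Finsupp.single (altY k) 1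

/-- `G_k` as an element of `V F`. -/
def Gn (F : Type*) [Field F] (k : ℕ) : V F := Finsupp.single (gw k) 1

/-- `G̃_k` as an element of `V F`. -/
def Gt (F : Type*) [Field F] (k : ℕ) : V F := Finsupp.single (gtw k) 1

section Aux
variable {F : Type*} [Field F]

lemma sh_nil (q : F) (v : Wd) : sh q [] v = Finsupp.single v 1 := by rw [sh]

lemma sh_cons_nil (q : F) (a : Bool) (u : Wd) :
    sh q (a :: u) [] = Finsupp.single (a :: u) 1 := by rw [sh]

lemma sh_nil_right (q : F) (u : Wd) : sh q u [] = Finsupp.single u 1 := by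
  cases u with
  | nil => rw [sh]
  | cons a u => rw [sh]

lemma sh_cons_cons (q : F) (a b : Bool) (u v : Wd) :
    sh q (a :: u) (b :: v) =
      lmul a (sh q u (b :: v)) + q ^ wsum (a :: u) b • lmul b (sh q (a :: u) v) := by
  rw [sh]

lemma lmul_add (a : Bool) (f g : V F) : lmul a (f + g) = lmul a f + lmul a g :=
  Finsupp.mapDomain_add

lemma lmul_smul (a : Bool) (c : F) (f : V F) : lmul a (c • f) = c • lmul a f :=
  Finsupp.mapDomain_smul c f

lemma lmul_single (a : Bool) (w : Wd) (c : F) :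
    lmul a (Finsupp.single w c) = Finsupp.single (a :: w) c :=
  Finsupp.mapDomain_single

lemma wsum_nil (b : Bool) : wsum [] b = 0 := rfl

lemma wsum_cons (a : Bool) (u : Wd) (b : Bool) :
    wsum (a :: u) b = pr a b + wsum u b := by
  simp [wsum]

lemma wsum_gw (k : ℕ) (b : Bool) : wsum (gw k) b = 0 := by
  induction k with
  | zero => rfl
  | succ k ih =>
      simp only [gw, wsum_cons, ih]
      cases b <;> simp [pr]

lemma altX_eq (k : ℕ) : altX k = false :: gw k := by
  induction k with
  | zero => rfl
  | succ k ih => simp [altX, gw, ih]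

end Aux
section Aux2
variable {F : Type*} [Field F]

lemma qq (q : F) (hq : q ≠ 0) : q ^ (2:ℤ) * q ^ (-2:ℤ) = 1 := by
  rw [← zpow_add₀ hq]; norm_num

lemma wsum_A_x (k : ℕ) : wsum (false :: gw k) false = 2 := by
  simp [wsum_cons, wsum_gw, pr]

lemma wsum_A_y (k : ℕ) : wsum (false :: gw k) true = -2 := by
  simp [wsum_cons, wsum_gw, pr]

lemma wsum_G_x (k : ℕ) : wsum (gw k) false = 0 := wsum_gw k false

lemma wsum_G_y (k : ℕ) : wsum (gw k) true = 0 := wsum_gw k true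

/-- Expansion of `A_k ⋆ A_l`. -/
lemma shAA (q : F) (k l : ℕ) :
    sh q (false :: gw k) (false :: gw l) =
      lmul false (sh q (gw k) (false :: gw l)) +
        q ^ (2:ℤ) • lmul false (sh q (false :: gw k) (gw l)) := by
  rw [sh_cons_cons, wsum_A_x]

/-- Expansion of `G_{k+1} ⋆ A_l`. -/
lemma shGA (q : F) (k l : ℕ) :
    sh q (gw (k+1)) (false :: gw l) =
      lmul true (sh q (false :: gw k) (false :: gw l)) +
        lmul false (sh q (gw (k+1)) (gw l)) := by
  show sh q (true :: false :: gw k) (false :: gw l) = _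
  rw [sh_cons_cons]
  have : wsum (true :: false :: gw k) false = 0 := by simp [wsum_cons, wsum_gw, pr]
  rw [this, zpow_zero, one_smul]
  rfl

/-- Expansion of `A_k ⋆ G_{l+1}`. -/
lemma shAG (q : F) (k l : ℕ) :
    sh q (false :: gw k) (gw (l+1)) =
      lmul false (sh q (gw k) (gw (l+1))) +
        q ^ (-2:ℤ) • lmul true (sh q (false :: gw k) (false :: gw l)) := by
  show sh q (false :: gw k) (true :: false :: gw l) = _
  rw [sh_cons_cons, wsum_A_y]
  rfl

/-- Expansion of `G_{k+1} ⋆ G_{l+1}`. -/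
lemma shGG (q : F) (k l : ℕ) :
    sh q (gw (k+1)) (gw (l+1)) =
      lmul true (sh q (false :: gw k) (gw (l+1))) +
        lmul true (sh q (gw (k+1)) (false :: gw l)) := by
  show sh q (true :: false :: gw k) (true :: false :: gw l) = _
  rw [sh_cons_cons]
  have : wsum (true :: false :: gw k) true = 0 := by simp [wsum_cons, wsum_gw, pr]
  rw [this, zpow_zero, one_smul]
  rfl

end Aux2
section Aux3
variable {F : Type*} [Field F]

/-- Mutual induction: the `T`-identity `q² x⋆G_l − G_l⋆x = (q²−1)W_{−l}` (in additive
form) together with `x ⋆ W_{−l} = W_{−l} ⋆ x`. -/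
lemma TS (q : F) (hq : q ≠ 0) (l : ℕ) :
    (q ^ (2:ℤ) • sh q [false] (gw l) + Finsupp.single (false :: gw l) 1 =
      sh q (gw l) [false] + q ^ (2:ℤ) • Finsupp.single (false :: gw l) 1) ∧
    (sh q [false] (false :: gw l) = sh q (false :: gw l) [false]) := by
  induction l with
  | zero =>
      constructor
      · show q ^ (2:ℤ) • sh q [false] [] + _ = sh q [] [false] + _
        rw [sh_nil_right, sh_nil]
        exact add_comm _ _
      · rfl
  | succ l ih =>
      obtain ⟨hT, hS⟩ := ih
      have hw : wsum [false] true = (-2 : ℤ) := by simp [wsum_cons, wsum_nil, pr]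
      have hw2 : wsum (true :: false :: gw l) false = 0 := by
        simp [wsum_cons, wsum_gw, pr]
      have hwx : wsum [false] false = (2 : ℤ) := by simp [wsum_cons, wsum_nil, pr]
      have hR : sh q (true :: false :: gw l) [false] =
          lmul true (sh q (false :: gw l) [false]) +
            lmul false (Finsupp.single (true :: false :: gw l) 1) := by
        rw [sh_cons_cons, hw2, zpow_zero, one_smul, sh_nil_right]
      have hT' : q ^ (2:ℤ) • sh q [false] (true :: false :: gw l) +
          Finsupp.single (false :: true :: false :: gw l) 1 =
          sh q (true :: false :: gw l) [false] +
            q ^ (2:ℤ) • Finsupp.single (false :: true :: false :: gw l) 1 := by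
        rw [sh_cons_cons, sh_nil, hw, hS, hR]
        simp only [lmul_single, smul_add, smul_smul, qq q hq, one_smul]
        abel
      constructor
      · exact hT'
      · show sh q [false] (false :: true :: false :: gw l) =
            sh q (false :: true :: false :: gw l) [false]
        have hL : sh q (false :: true :: false :: gw l) [false] =
            lmul false (sh q (true :: false :: gw l) [false]) +
              q ^ (2:ℤ) • lmul false (Finsupp.single (false :: true :: false :: gw l) 1) := by
          rw [sh_cons_cons]
          have : wsum (false :: true :: false :: gw l) false = (2:ℤ) := by
            simp [wsum_cons, wsum_gw, pr]
          rw [this, sh_nil_right]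
        rw [sh_cons_cons, sh_nil, hwx, hL]
        have h2 := congrArg (lmul false) hT'
        simp only [lmul_add, lmul_smul, lmul_single] at h2 ⊢
        rw [add_comm]
        exact h2

end Aux3
section Aux4
variable {F : Type*} [Field F]

lemma core (q : F) (hq : q ≠ 0) :
    ∀ n k l, k + l ≤ n →
      (sh q (gw k) (gw l) = sh q (gw l) (gw k)) ∧
      (sh q (false :: gw k) (false :: gw l) = sh q (false :: gw l) (false :: gw k)) := by
  intro n
  induction n with
  | zero =>
      intro k l h
      obtain ⟨rfl, rfl⟩ : k = 0 ∧ l = 0 := by omega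
      exact ⟨rfl, rfl⟩
  | succ n ih =>
      intro k l hkl
      match k, l with
      | 0, l =>
          refine ⟨?_, ?_⟩
          · show sh q [] (gw l) = sh q (gw l) []
            rw [sh_nil, sh_nil_right]
          · exact (TS q hq l).2
      | k + 1, 0 =>
          refine ⟨?_, ?_⟩
          · show sh q (gw (k+1)) [] = sh q [] (gw (k+1))
            rw [sh_nil, sh_nil_right]
          · exact ((TS q hq (k+1)).2).symm
      | k + 1, l + 1 =>
          have ihGk : sh q (gw k) (gw (l+1)) = sh q (gw (l+1)) (gw k) :=
            (ih k (l+1) (by omega)).1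
          have ihGl : sh q (gw (k+1)) (gw l) = sh q (gw l) (gw (k+1)) :=
            (ih (k+1) l (by omega)).1
          have ihA : sh q (false :: gw k) (false :: gw l) =
              sh q (false :: gw l) (false :: gw k) := (ih k l (by omega)).2
          have h4 : sh q (gw (k+1)) (gw (l+1)) = sh q (gw (l+1)) (gw (k+1)) := by
            rw [shGG q k l, shGG q l k, shAG q k l, shAG q l k, shGA q k l, shGA q l k,
              ihGk, ihGl, ihA]
            simp only [lmul_add, lmul_smul]
            abel
          have ihAk : sh q (false :: gw k) (false :: gw (l+1)) =
              sh q (false :: gw (l+1)) (false :: gw k) := (ih k (l+1) (by omega)).2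
          have ihAl : sh q (false :: gw (k+1)) (false :: gw l) =
              sh q (false :: gw l) (false :: gw (k+1)) := (ih (k+1) l (by omega)).2
          have h1 : sh q (false :: gw (k+1)) (false :: gw (l+1)) =
              sh q (false :: gw (l+1)) (false :: gw (k+1)) := by
            rw [shAA q (k+1) (l+1), shAA q (l+1) (k+1), shGA q k (l+1), shGA q l (k+1),
              shAG q (k+1) l, shAG q (l+1) k, ihAk, ihAl, h4]
            simp only [lmul_add, lmul_smul, smul_add, smul_smul, qq q hq, one_smul]
            abel
          exact ⟨h4, h1⟩

end Aux4
section Aux5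
variable {F : Type*} [Field F]

lemma pr_not (a b : Bool) : pr (!a) (!b) = pr a b := by cases a <;> cases b <;> rfl

lemma wsum_not (u : Wd) (b : Bool) : wsum (u.map not) (!b) = wsum u b := by
  induction u with
  | nil => rfl
  | cons a u ih => simp [wsum_cons, pr_not, ih]

lemma lmul_flip (c : Bool) (f : V F) :
    lmul (!c) (Finsupp.mapDomain (List.map not) f) =
      Finsupp.mapDomain (List.map not) (lmul c f) := by
  rw [lmul, lmul, ← Finsupp.mapDomain_comp, ← Finsupp.mapDomain_comp]
  rfl

lemma sh_flip (q : F) :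
    ∀ n (u v : Wd), u.length + v.length ≤ n →
      sh q (u.map not) (v.map not) = Finsupp.mapDomain (List.map not) (sh q u v) := by
  intro n
  induction n with
  | zero =>
      intro u v h
      obtain ⟨rfl, rfl⟩ : u = [] ∧ v = [] := by
        constructor <;> (apply List.eq_nil_of_length_eq_zero; omega)
      simp [sh_nil, Finsupp.mapDomain_single]
  | succ n ih =>
      intro u v h
      match u, v with
      | [], v => simp [sh_nil, Finsupp.mapDomain_single]
      | a :: u, [] => simp [sh_cons_nil, sh_nil_right, Finsupp.mapDomain_single]
      | a :: u, b :: v =>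
          simp only [List.map_cons]
          rw [sh_cons_cons, sh_cons_cons]
          have h1 : sh q (u.map not) ((!b) :: v.map not) =
              Finsupp.mapDomain (List.map not) (sh q u (b :: v)) := by
            have := ih u (b :: v) (by simp at h ⊢; omega)
            simpa using this
          have h2 : sh q ((!a) :: u.map not) (v.map not) =
              Finsupp.mapDomain (List.map not) (sh q (a :: u) v) := by
            have := ih (a :: u) v (by simp at h ⊢; omega)
            simpa using this
          have hw : wsum ((!a) :: u.map not) (!b) = wsum (a :: u) b := by
            have := wsum_not (a :: u) b
            simpa using this
          rw [h1, h2, hw, lmul_flip, lmul_flip,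
            Finsupp.mapDomain_add, Finsupp.mapDomain_smul]

lemma altY_eq (k : ℕ) : altY k = (altX k).map not := by
  induction k with
  | zero => rfl
  | succ k ih => simp [altY, altX, ih]

lemma st_single (q : F) (u v : Wd) :
    st q (Finsupp.single u (1:F)) (Finsupp.single v 1) = sh q u v := by
  rw [st, Finsupp.sum_single_index, Finsupp.sum_single_index]
  · simp
  · simp
  · simp [Finsupp.sum_single_index]

end Aux5
/-- `W_{−k} ⋆ W_{−ℓ} = W_{−ℓ} ⋆ W_{−k}` and `W_{k+1} ⋆ W_{ℓ+1} = W_{ℓ+1} ⋆ W_{k+1}`. -/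
theorem stmt_4 {F : Type*} [Field F] (q : F) (hq : q ≠ 0)
    (hq' : ∀ n : ℕ, 0 < n → q ^ n ≠ 1) (k l : ℕ) :
    st q (Wm F k) (Wm F l) = st q (Wm F l) (Wm F k) ∧
    st q (Wp F k) (Wp F l) = st q (Wp F l) (Wp F k) := by
  have hx : ∀ k l : ℕ, sh q (altX k) (altX l) = sh q (altX l) (altX k) := by
    intro k l
    rw [altX_eq, altX_eq]
    exact (core q hq (k + l) k l le_rfl).2
  constructor
  · rw [Wm, Wm, st_single, st_single]
    exact hx k l
  · rw [Wp, Wp, st_single, st_single, altY_eq, altY_eq]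
    calc sh q ((altX k).map not) ((altX l).map not)
        = Finsupp.mapDomain (List.map not) (sh q (altX k) (altX l)) :=
          sh_flip q ((altX k).length + (altX l).length) (altX k) (altX l) le_rfl
      _ = Finsupp.mapDomain (List.map not) (sh q (altX l) (altX k)) := by rw [hx]
      _ = sh q ((altX l).map not) ((altX k).map not) :=
          (sh_flip q ((altX l).length + (altX k).length) (altX l) (altX k) le_rfl).symm
end
end

section
/- In the q-shuffle algebra V, for all k, ℓ ∈ ℕ the words G_{k+1} = (yx)^{k+1} and G_{ℓ+1} = (yx)^{ℓ+1} commute under ⋆, and similarly G̃_{k+1} = (xy)^{k+1} and G̃_{ℓ+1} = (xy)^{ℓ+1} commute under ⋆. Moreover [G̃_{k+1}, G_{ℓ+1}]_⋆ + [G_{k+1}, G̃_{ℓ+1}]_⋆ = 0. -/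
noncomputable section

variable {F : Type*} [Field F]

/-!
Write `c̄` for the letter other than `c`, and `E_c(k)`, `O_c(k)` for the alternating words of
lengths `2k` and `2k - 1` ending in `c`, so that `G_k = E_x(k)` and `G̃_k = E_y(k)`. The words
`E_c(k)` have weight zero, so peeling the first letters off both factors in Rosso's recursion
produces only the powers `q^{±2}`; two rounds of this show that `A(k, l) = E_c(k) ⋆ E_c(l)` and
`B(k, l) = O_c(k) ⋆ O_c(l)` satisfy the Pascal-type recurrences
  `A(k+1,l+1) = c̄c·(A(k,l+1) + A(k+1,l)) + (1 + q⁻²) c̄c̄·B(k+1,l+1)`,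
  `B(k+1,l+1) = cc̄·(B(k,l+1) + B(k+1,l)) + (1 + q²) cc·A(k,l)`
(`ab·X` prepends the letters `a b` to every word of `X`). Their shape is invariant under `k ↔ l`,
so with symmetric boundary values induction on `k + l` makes `A` and `B` symmetric. For the mixed
relation, `O_c(k) ⋆ E_c̄(l) + E_c̄(k) ⋆ O_c(l)` and `E_c(k) ⋆ O_c̄(l+1) + q⁻² O_c̄(k+1) ⋆ E_c(l)`
satisfy the very same recurrences, and `E_c(k+1) ⋆ E_c̄(l+1) + E_c̄(k+1) ⋆ E_c(l+1)` is a sum of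
one-letter translates of the first of these for `c` and for `c̄`.
-/

theorem symm_of_pascal_recurrence {M : Type*} [AddCommMonoid M] {f g : ℕ → ℕ → M}
    (Φ Ψ : M → M → M) (hf₀ : ∀ k, f k 0 = f 0 k) (hg₀ : ∀ k, g k 0 = g 0 k)
    (hf : ∀ k l, f (k + 1) (l + 1) = Φ (f k (l + 1) + f (k + 1) l) (g (k + 1) (l + 1)))
    (hg : ∀ k l, g (k + 1) (l + 1) = Ψ (g k (l + 1) + g (k + 1) l) (f k l)) (k l : ℕ) :
    f k l = f l k ∧ g k l = g l k := by
  induction h : k + l using Nat.strong_induction_on generalizing k l with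
  | _ n ih =>
    have hg_kl : g k l = g l k := by
      match k, l with
      | 0, l => exact (hg₀ l).symm
      | k + 1, 0 => exact hg₀ (k + 1)
      | k + 1, l + 1 =>
        rw [hg, hg, (ih _ (by omega) k (l + 1) rfl).2, (ih _ (by omega) (k + 1) l rfl).2,
          (ih _ (by omega) k l rfl).1, add_comm]
    refine ⟨?_, hg_kl⟩
    match k, l with
    | 0, l => exact (hf₀ l).symm
    | k + 1, 0 => exact hf₀ (k + 1)
    | k + 1, l + 1 =>
      rw [hf, hf, (ih _ (by omega) k (l + 1) rfl).1, (ih _ (by omega) (k + 1) l rfl).1, hg_kl,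
        add_comm]

namespace QShuffle

lemma sh_nil_left (q : F) (v : Wd) : sh q [] v = Finsupp.single v 1 := by
  rw [sh]

lemma sh_nil_right (q : F) (u : Wd) : sh q u [] = Finsupp.single u 1 := by
  cases u <;> rw [sh]

lemma sh_cons_cons (q : F) (a b : Bool) (u v : Wd) :
    sh q (a :: u) (b :: v) =
      lmul a (sh q u (b :: v)) + q ^ wsum (a :: u) b • lmul b (sh q (a :: u) v) := by
  rw [sh]

lemma st_single_single (q : F) (u v : Wd) :
    st q (Finsupp.single u 1) (Finsupp.single v 1) = sh q u v := by
  simp [st]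

lemma st_zero_left (q : F) (g : V F) : st q 0 g = 0 := by
  simp [st]

lemma st_zero_right (q : F) (f : V F) : st q f 0 = 0 := by
  simp [st]

lemma lmul_single (a : Bool) (w : Wd) (c : F) :
    lmul a (Finsupp.single w c) = Finsupp.single (a :: w) c :=
  Finsupp.mapDomain_single

lemma lmul_zero (a : Bool) : lmul a (0 : V F) = 0 :=
  Finsupp.mapDomain_zero

lemma lmul_add (a : Bool) (f g : V F) : lmul a (f + g) = lmul a f + lmul a g :=
  Finsupp.mapDomain_add

lemma lmul_smul (a : Bool) (c : F) (f : V F) : lmul a (c • f) = c • lmul a f :=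
  Finsupp.mapDomain_smul c f

lemma pr_self (a : Bool) : pr a a = 2 := by
  simp [pr]

lemma pr_not_right (a : Bool) : pr a (!a) = -2 := by
  cases a <;> rfl

lemma pr_not_left (a : Bool) : pr (!a) a = -2 := by
  cases a <;> rfl

lemma wsum_cons (a b : Bool) (u : Wd) : wsum (a :: u) b = pr a b + wsum u b := by
  simp [wsum]

def altWord (c : Bool) : ℕ → Wd
  | 0 => []
  | k + 1 => (!c) :: c :: altWord c k

lemma altWord_succ (c : Bool) (k : ℕ) : altWord c (k + 1) = (!c) :: c :: altWord c k := rfl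

lemma altWord_false : altWord false = gw := by
  funext k
  induction k with
  | zero => rfl
  | succ k ih => simp [altWord, gw, ih]

lemma altWord_true : altWord true = gtw := by
  funext k
  induction k with
  | zero => rfl
  | succ k ih => simp [altWord, gtw, ih]

lemma wsum_altWord (c b : Bool) (k : ℕ) : wsum (altWord c k) b = 0 := by
  induction k with
  | zero => rfl
  | succ k ih => cases c <;> cases b <;> simp [altWord, wsum_cons, ih, pr]

lemma wsum_cons_altWord (c b : Bool) (k : ℕ) : wsum (c :: altWord c k) b = pr c b := by
  rw [wsum_cons, wsum_altWord, add_zero]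

def evenAlt (c : Bool) (k : ℕ) : V F := Finsupp.single (altWord c k) 1

-- The value `0` at `k = 0` lets the one-step recursions below hold on the boundary as well.
def oddAlt (c : Bool) : ℕ → V F
  | 0 => 0
  | k + 1 => Finsupp.single (c :: altWord c k) 1

lemma oddAlt_zero (c : Bool) : (oddAlt c 0 : V F) = 0 := rfl

section OneStep

variable (q : F) (c d : Bool) (k l : ℕ)

lemma st_evenAlt_evenAlt_succ :
    st q (evenAlt c k) (evenAlt d (l + 1)) =
      lmul (!c) (st q (oddAlt c k) (evenAlt d (l + 1))) +
        lmul (!d) (st q (evenAlt c k) (oddAlt d (l + 1))) := by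
  cases k with
  | zero =>
    simp [evenAlt, oddAlt, altWord, st_zero_left, st_single_single, sh_nil_left, lmul_zero,
      lmul_single]
  | succ k =>
    simp only [evenAlt, oddAlt, st_single_single]
    rw [altWord_succ c k, altWord_succ d l, sh_cons_cons q (!c) (!d), ← altWord_succ,
      ← altWord_succ, wsum_altWord, zpow_zero, one_smul]

lemma st_evenAlt_succ_evenAlt :
    st q (evenAlt c (k + 1)) (evenAlt d l) =
      lmul (!c) (st q (oddAlt c (k + 1)) (evenAlt d l)) +
        lmul (!d) (st q (evenAlt c (k + 1)) (oddAlt d l)) := by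
  cases l with
  | zero =>
    simp [evenAlt, oddAlt, altWord, st_zero_right, st_single_single, sh_nil_right, lmul_zero,
      lmul_single]
  | succ l => exact st_evenAlt_evenAlt_succ q c d (k + 1) l

lemma st_oddAlt_succ_evenAlt :
    st q (oddAlt c (k + 1)) (evenAlt d l) =
      lmul c (st q (evenAlt c k) (evenAlt d l)) +
        q ^ pr c (!d) • lmul (!d) (st q (oddAlt c (k + 1)) (oddAlt d l)) := by
  cases l with
  | zero =>
    simp [evenAlt, oddAlt, altWord, st_zero_right, st_single_single, sh_nil_right, lmul_zero,
      lmul_single]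
  | succ l =>
    simp only [evenAlt, oddAlt, st_single_single]
    rw [altWord_succ d l, sh_cons_cons, wsum_cons_altWord]

lemma st_evenAlt_oddAlt_succ :
    st q (evenAlt c k) (oddAlt d (l + 1)) =
      lmul (!c) (st q (oddAlt c k) (oddAlt d (l + 1))) +
        lmul d (st q (evenAlt c k) (evenAlt d l)) := by
  cases k with
  | zero =>
    simp [evenAlt, oddAlt, altWord, st_zero_left, st_single_single, sh_nil_left, lmul_zero,
      lmul_single]
  | succ k =>
    simp only [evenAlt, oddAlt, st_single_single]
    rw [altWord_succ c k, sh_cons_cons q (!c) d, ← altWord_succ, wsum_altWord, zpow_zero,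
      one_smul]

lemma st_oddAlt_succ_oddAlt_succ :
    st q (oddAlt c (k + 1)) (oddAlt d (l + 1)) =
      lmul c (st q (evenAlt c k) (oddAlt d (l + 1))) +
        q ^ pr c d • lmul d (st q (oddAlt c (k + 1)) (evenAlt d l)) := by
  simp only [evenAlt, oddAlt, st_single_single]
  rw [sh_cons_cons, wsum_cons_altWord]

end OneStep

def pascalStep (q : F) (a b : Bool) (e : ℤ) (s t : V F) : V F :=
  lmul a (lmul b s) + (1 + q ^ e) • lmul a (lmul a t)

section Pure

variable {q : F} (c : Bool) (k l : ℕ)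

lemma st_evenAlt_self_succ_succ :
    st q (evenAlt c (k + 1)) (evenAlt c (l + 1)) =
      pascalStep q (!c) c (-2)
        (st q (evenAlt c k) (evenAlt c (l + 1)) + st q (evenAlt c (k + 1)) (evenAlt c l))
        (st q (oddAlt c (k + 1)) (oddAlt c (l + 1))) := by
  rw [st_evenAlt_evenAlt_succ q c c (k + 1) l, st_oddAlt_succ_evenAlt q c c k (l + 1),
    st_evenAlt_oddAlt_succ q c c (k + 1) l]
  simp only [pascalStep, pr_not_right, lmul_add, lmul_smul]
  module

lemma st_oddAlt_self_succ_succ (hq : q ≠ 0) :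
    st q (oddAlt c (k + 1)) (oddAlt c (l + 1)) =
      pascalStep q c (!c) 2
        (st q (oddAlt c k) (oddAlt c (l + 1)) + st q (oddAlt c (k + 1)) (oddAlt c l))
        (st q (evenAlt c k) (evenAlt c l)) := by
  rw [st_oddAlt_succ_oddAlt_succ q c c k l, st_evenAlt_oddAlt_succ q c c k l,
    st_oddAlt_succ_evenAlt q c c k l]
  simp only [pascalStep, pr_self, pr_not_right, lmul_add, lmul_smul]
  match_scalars <;> field_simp

theorem st_evenAlt_comm (hq : q ≠ 0) :
    st q (evenAlt c k) (evenAlt c l) = st q (evenAlt c l) (evenAlt c k) := by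
  refine (symm_of_pascal_recurrence (f := fun k l => st q (evenAlt c k) (evenAlt c l))
    (g := fun k l => st q (oddAlt c k) (oddAlt c l)) (pascalStep q (!c) c (-2))
    (pascalStep q c (!c) 2) (fun k => ?_) (fun k => ?_) (st_evenAlt_self_succ_succ c)
    (st_oddAlt_self_succ_succ c · · hq) k l).1
  · simp [evenAlt, altWord, st_single_single, sh_nil_left, sh_nil_right]
  · rw [oddAlt_zero, st_zero_left, st_zero_right]

end Pure

def oddEvenSum (q : F) (c : Bool) (k l : ℕ) : V F :=
  st q (oddAlt c k) (evenAlt (!c) l) + st q (evenAlt (!c) k) (oddAlt c l)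

def evenOddQSum (q : F) (c : Bool) (k l : ℕ) : V F :=
  st q (evenAlt c k) (oddAlt (!c) (l + 1)) +
    q ^ (-2 : ℤ) • st q (oddAlt (!c) (k + 1)) (evenAlt c l)

section Mixed

variable {q : F} (c : Bool) (k l : ℕ)

lemma oddEvenSum_succ_succ (hq : q ≠ 0) :
    oddEvenSum q c (k + 1) (l + 1) =
      pascalStep q c (!c) 2 (oddEvenSum q c k (l + 1) + oddEvenSum q c (k + 1) l)
        (evenOddQSum q c k l) := by
  unfold oddEvenSum evenOddQSum
  rw [st_oddAlt_succ_evenAlt q c (!c) k (l + 1), st_evenAlt_oddAlt_succ q (!c) c (k + 1) l,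
    st_evenAlt_evenAlt_succ q c (!c) k l, st_evenAlt_succ_evenAlt q (!c) c k l,
    st_oddAlt_succ_oddAlt_succ q c (!c) k l, st_oddAlt_succ_oddAlt_succ q (!c) c k l]
  simp only [pascalStep, Bool.not_not, pr_self, pr_not_right, pr_not_left, lmul_add, lmul_smul]
  match_scalars <;> field_simp

lemma evenOddQSum_succ_succ (hq : q ≠ 0) :
    evenOddQSum q c (k + 1) (l + 1) =
      pascalStep q (!c) c (-2) (evenOddQSum q c k (l + 1) + evenOddQSum q c (k + 1) l)
        (oddEvenSum q c (k + 1) (l + 1)) := by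
  unfold oddEvenSum evenOddQSum
  rw [st_evenAlt_oddAlt_succ q c (!c) (k + 1) (l + 1),
    st_oddAlt_succ_evenAlt q (!c) c (k + 1) (l + 1),
    st_oddAlt_succ_oddAlt_succ q c (!c) k (l + 1), st_oddAlt_succ_oddAlt_succ q (!c) c (k + 1) l,
    st_evenAlt_evenAlt_succ q c (!c) (k + 1) l, st_evenAlt_evenAlt_succ q (!c) c (k + 1) l]
  simp only [pascalStep, Bool.not_not, pr_self, pr_not_right, pr_not_left, lmul_add, lmul_smul]
  match_scalars <;> field_simp <;> ring

lemma evenOddQSum_succ_zero (hq : q ≠ 0) :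
    evenOddQSum q c (k + 1) 0 =
      pascalStep q (!c) c (-2) (evenOddQSum q c k 0) (oddEvenSum q c (k + 1) 0) := by
  unfold oddEvenSum evenOddQSum
  rw [st_evenAlt_oddAlt_succ q c (!c) (k + 1) 0, st_oddAlt_succ_evenAlt q (!c) c (k + 1) 0,
    st_oddAlt_succ_oddAlt_succ q c (!c) k 0, st_evenAlt_succ_evenAlt q c (!c) k 0,
    st_evenAlt_succ_evenAlt q (!c) c k 0]
  simp only [pascalStep, oddAlt_zero, st_zero_right, lmul_zero, smul_zero, add_zero,
    Bool.not_not, pr_self, pr_not_right, lmul_add, lmul_smul]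
  match_scalars <;> field_simp
  ring

lemma evenOddQSum_zero_succ (hq : q ≠ 0) :
    evenOddQSum q c 0 (l + 1) =
      pascalStep q (!c) c (-2) (evenOddQSum q c 0 l) (oddEvenSum q c 0 (l + 1)) := by
  unfold oddEvenSum evenOddQSum
  rw [st_evenAlt_oddAlt_succ q c (!c) 0 (l + 1), st_oddAlt_succ_evenAlt q (!c) c 0 (l + 1),
    st_oddAlt_succ_oddAlt_succ q (!c) c 0 l, st_evenAlt_evenAlt_succ q c (!c) 0 l,
    st_evenAlt_evenAlt_succ q (!c) c 0 l]
  simp only [pascalStep, oddAlt_zero, st_zero_left, lmul_zero, zero_add,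
    Bool.not_not, pr_self, pr_not_left, lmul_add, lmul_smul]
  match_scalars <;> field_simp
  ring

lemma oddEvenSum_comm_zero : oddEvenSum q c k 0 = oddEvenSum q c 0 k := by
  cases k with
  | zero => rfl
  | succ k =>
    simp [oddEvenSum, evenAlt, oddAlt, altWord, st_zero_left, st_zero_right, st_single_single,
      sh_nil_left, sh_nil_right]

lemma evenOddQSum_comm_zero (hq : q ≠ 0) :
    evenOddQSum q c k 0 = evenOddQSum q c 0 k := by
  induction k with
  | zero => rfl
  | succ k ih =>
    rw [evenOddQSum_succ_zero c k hq, evenOddQSum_zero_succ c k hq, ih, oddEvenSum_comm_zero]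

theorem oddEvenSum_comm (hq : q ≠ 0) : oddEvenSum q c k l = oddEvenSum q c l k :=
  (symm_of_pascal_recurrence (pascalStep q (!c) c (-2)) (pascalStep q c (!c) 2)
    (evenOddQSum_comm_zero c · hq) (oddEvenSum_comm_zero c) (evenOddQSum_succ_succ c · · hq)
    (oddEvenSum_succ_succ c · · hq) k l).2

lemma st_evenAlt_add_st_evenAlt_succ :
    st q (evenAlt c k) (evenAlt (!c) (l + 1)) + st q (evenAlt (!c) k) (evenAlt c (l + 1)) =
      lmul (!c) (oddEvenSum q c k (l + 1)) + lmul c (oddEvenSum q (!c) k (l + 1)) := by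
  rw [st_evenAlt_evenAlt_succ q c (!c) k l, st_evenAlt_evenAlt_succ q (!c) c k l]
  simp only [oddEvenSum, Bool.not_not, lmul_add]
  abel

theorem st_evenAlt_add_st_evenAlt_comm (hq : q ≠ 0) :
    st q (evenAlt c k) (evenAlt (!c) l) + st q (evenAlt (!c) k) (evenAlt c l) =
      st q (evenAlt c l) (evenAlt (!c) k) + st q (evenAlt (!c) l) (evenAlt c k) := by
  match k, l with
  | 0, l => simp [evenAlt, altWord, st_single_single, sh_nil_left, sh_nil_right, add_comm]
  | k + 1, 0 => simp [evenAlt, altWord, st_single_single, sh_nil_left, sh_nil_right, add_comm]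
  | k + 1, l + 1 =>
    rw [st_evenAlt_add_st_evenAlt_succ, st_evenAlt_add_st_evenAlt_succ, oddEvenSum_comm c _ _ hq,
      oddEvenSum_comm (!c) _ _ hq]

end Mixed

end QShuffle

theorem stmt_6_general {F : Type*} [Field F] (q : F) (hq : q ≠ 0) (k l : ℕ) :
    st q (Gn F (k + 1)) (Gn F (l + 1)) = st q (Gn F (l + 1)) (Gn F (k + 1)) ∧
    st q (Gt F (k + 1)) (Gt F (l + 1)) = st q (Gt F (l + 1)) (Gt F (k + 1)) ∧
    (st q (Gt F (k + 1)) (Gn F (l + 1)) - st q (Gn F (l + 1)) (Gt F (k + 1)))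
      + (st q (Gn F (k + 1)) (Gt F (l + 1)) - st q (Gt F (l + 1)) (Gn F (k + 1))) = 0 := by
  have hGn : Gn F = QShuffle.evenAlt false := by
    funext n; rw [Gn, QShuffle.evenAlt, QShuffle.altWord_false]
  have hGt : Gt F = QShuffle.evenAlt true := by
    funext n; rw [Gt, QShuffle.evenAlt, QShuffle.altWord_true]
  rw [hGn, hGt]
  refine ⟨QShuffle.st_evenAlt_comm _ _ _ hq, QShuffle.st_evenAlt_comm _ _ _ hq, ?_⟩
  rw [sub_add_sub_comm, sub_eq_zero]
  exact (QShuffle.st_evenAlt_add_st_evenAlt_comm true _ _ hq).trans (add_comm _ _)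

/-- `[G_{k+1}, G_{ℓ+1}] = 0`, `[G̃_{k+1}, G̃_{ℓ+1}] = 0`, and
`[G̃_{k+1}, G_{ℓ+1}] + [G_{k+1}, G̃_{ℓ+1}] = 0`. -/
theorem stmt_6 {F : Type*} [Field F] (q : F) (hq : q ≠ 0)
    (hq' : ∀ n : ℕ, 0 < n → q ^ n ≠ 1) (k l : ℕ) :
    st q (Gn F (k + 1)) (Gn F (l + 1)) = st q (Gn F (l + 1)) (Gn F (k + 1)) ∧
    st q (Gt F (k + 1)) (Gt F (l + 1)) = st q (Gt F (l + 1)) (Gt F (k + 1)) ∧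
    (st q (Gt F (k + 1)) (Gn F (l + 1)) - st q (Gn F (l + 1)) (Gt F (k + 1)))
      + (st q (Gn F (k + 1)) (Gt F (l + 1)) - st q (Gt F (l + 1)) (Gn F (k + 1))) = 0 :=
  stmt_6_general q hq k l
end
end
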